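/- arXiv:1309.1737 — 2 statements merged into one kernel-verified Lean document; each statement's English description precedes it below -/
import Mathlib

section
/- For linearly independent ξ_1, ξ_2 ∈ ℝ³, the kernel K(ξ_1, ξ_2) = lim_{ε_1, ε_2 → 0} (1/4π) ∫_{S²} δ_{ε_1}(ξ_1·θ) δ_{ε_2}(ξ_2·θ) dθ equals 1/(2π |ξ_1 × ξ_2|). -/
/-!
Put `c = ξ₁ × ξ₂` and `u = c / ‖c‖`. The integral is `(4 ε₁ ε₂)⁻¹` times the area of
`{θ ∈ S² : |ξ₁·θ| ≤ ε₁, |ξ₂·θ| ≤ ε₂}`, which is three times the volume of the truncated cone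
`{x : ‖x‖ < 1, |ξᵢ·x| ≤ εᵢ ‖x‖}`. In the coordinates `(t, p, q) = (u·x, ξ₁·x, ξ₂·x)`, whose
Jacobian is `u·c = ‖c‖`, one has `|t| ≤ ‖x‖ ≤ |t| + K (|p| + |q|)`, so with `r = K (ε₁ + ε₂)`
the cone is squeezed between the slabs `|t| ≤ L, |p| ≤ ε₁ (|t| + ρ), |q| ≤ ε₂ (|t| + ρ)` for
`(L, ρ) = ((1 + r)⁻², 0)` and `(L, ρ) = (1, r)`. Their volumes are `8 ε₁ ε₂ ((L + ρ)³ - ρ³) / 3`,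
hence the cone has volume `(8 + o(1)) ε₁ ε₂ / (3 ‖c‖)` and the kernel tends to
`(4π)⁻¹ · (4 ε₁ ε₂)⁻¹ · 3 · 8 ε₁ ε₂ / (3 ‖c‖) = 1 / (2π ‖c‖)`.
-/

open MeasureTheory Filter Metric Set
open scoped Topology RealInnerProductSpace

noncomputable def sphereMeasure :
    Measure (sphere (0 : EuclideanSpace ℝ (Fin 3)) 1) :=
  (volume : Measure (EuclideanSpace ℝ (Fin 3))).toSphere

noncomputable def cross3 (a b : EuclideanSpace ℝ (Fin 3)) : EuclideanSpace ℝ (Fin 3) :=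
  (EuclideanSpace.equiv (Fin 3) ℝ).symm
    (crossProduct (EuclideanSpace.equiv (Fin 3) ℝ a) (EuclideanSpace.equiv (Fin 3) ℝ b))

open scoped Pointwise

theorem integral_indicator_Icc_mul_indicator_Icc {α : Type*} [MeasurableSpace α]
    (μ : Measure α) {f g : α → ℝ} (hf : Measurable f) (hg : Measurable g) (a b ε₁ ε₂ : ℝ) :
    ∫ x, (a * (Icc (-ε₁) ε₁).indicator (fun _ => (1 : ℝ)) (f x)) *
        (b * (Icc (-ε₂) ε₂).indicator (fun _ => (1 : ℝ)) (g x)) ∂μ =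
      a * b * μ.real {x | |f x| ≤ ε₁ ∧ |g x| ≤ ε₂} := by
  have hs : MeasurableSet {x | |f x| ≤ ε₁ ∧ |g x| ≤ ε₂} :=
    (measurableSet_le hf.abs measurable_const).inter (measurableSet_le hg.abs measurable_const)
  rw [← integral_indicator_one hs, ← integral_const_mul]
  congr 1 with x
  simp only [indicator_apply, mem_Icc, ← abs_le, mem_ofPred_eq, Pi.one_apply]
  split_ifs <;> simp_all

section Sphere

variable {E : Type*} [NormedAddCommGroup E] [NormedSpace ℝ E]

theorem Ioo_smul_sphere_inter_of_smul_mem_iff {W : Set E}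
    (hW : ∀ t : ℝ, 0 < t → ∀ x, t • x ∈ W ↔ x ∈ W) :
    Ioo (0 : ℝ) 1 • (sphere (0 : E) 1 ∩ W) = (ball 0 1 ∩ W) \ {0} := by
  ext x
  simp only [Set.mem_smul, mem_inter_iff, mem_sphere_zero_iff_norm, Set.mem_sdiff,
    mem_ball_zero_iff, mem_singleton_iff]
  constructor
  · rintro ⟨t, ⟨ht₀, ht₁⟩, y, ⟨hy, hyW⟩, rfl⟩
    refine ⟨⟨?_, (hW t ht₀ y).2 hyW⟩, smul_ne_zero ht₀.ne' (norm_ne_zero_iff.1 (by simp [hy]))⟩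
    rwa [norm_smul, hy, mul_one, Real.norm_of_nonneg ht₀.le]
  · rintro ⟨⟨hx, hxW⟩, hx₀⟩
    have hx₀' : 0 < ‖x‖ := norm_pos_iff.2 hx₀
    refine ⟨‖x‖, ⟨hx₀', hx⟩, ‖x‖⁻¹ • x, ⟨?_, (hW _ (inv_pos.2 hx₀') x).2 hxW⟩, ?_⟩
    · rw [norm_smul, norm_inv, norm_norm, inv_mul_cancel₀ hx₀'.ne']
    · exact smul_inv_smul₀ hx₀'.ne' x

theorem Measure.toSphere_preimage_coe_of_smul_mem_iff [MeasurableSpace E] [BorelSpace E]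
    (μ : Measure E) [NullSingletonClass μ] {W : Set E} (hWm : MeasurableSet W)
    (hW : ∀ t : ℝ, 0 < t → ∀ x, t • x ∈ W ↔ x ∈ W) :
    μ.toSphere ((↑) ⁻¹' W) = Module.finrank ℝ E * μ (ball 0 1 ∩ W) := by
  rw [μ.toSphere_apply' (measurable_subtype_coe hWm), Subtype.image_preimage_coe,
    Ioo_smul_sphere_inter_of_smul_mem_iff hW, measure_sdiff_null (measure_singleton 0)]

end Sphere

theorem intervalIntegral.integral_comp_abs_of_continuous {g : ℝ → ℝ} (hg : Continuous g)
    {L : ℝ} (hL : 0 ≤ L) : ∫ t in -L..L, g |t| = 2 * ∫ t in 0..L, g t := by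
  have hneg : ∫ t in -L..0, g |t| = ∫ t in 0..L, g t := by
    rw [integral_congr (g := fun t => g (-t)) fun t ht => by
      rw [uIcc_of_le (by linarith)] at ht; simp [abs_of_nonpos ht.2]]
    simp [integral_comp_neg]
  have hpos : ∫ t in (0 : ℝ)..L, g |t| = ∫ t in 0..L, g t :=
    integral_congr fun t ht => by
      rw [uIcc_of_le hL] at ht; simp [abs_of_nonneg ht.1]
  have hi (a b : ℝ) : IntervalIntegrable (fun t => g |t|) volume a b :=
    (hg.comp continuous_abs).intervalIntegrable a b
  rw [← integral_add_adjacent_intervals (hi _ _) (hi _ _), hneg, hpos]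
  ring

theorem integral_Icc_abs_add_sq {L : ℝ} (ρ : ℝ) (hL : 0 ≤ L) :
    ∫ t in Icc (-L) L, (|t| + ρ) ^ 2 = 2 * ((L + ρ) ^ 3 - ρ ^ 3) / 3 := by
  rw [integral_Icc_eq_integral_Ioc, ← intervalIntegral.integral_of_le (by linarith),
    intervalIntegral.integral_comp_abs_of_continuous (g := fun t => (t + ρ) ^ 2)
      (by fun_prop) hL,
    intervalIntegral.integral_comp_add_right (fun t => t ^ 2), integral_pow]
  ring

theorem volume_abs_le_and_abs_le {α β : ℝ} (hα : 0 ≤ α) :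
    volume {q : Fin 2 → ℝ | |q 0| ≤ α ∧ |q 1| ≤ β} = ENNReal.ofReal (2 * α * (2 * β)) := by
  have : {q : Fin 2 → ℝ | |q 0| ≤ α ∧ |q 1| ≤ β} = univ.pi ![Icc (-α) α, Icc (-β) β] := by
    ext q
    simp [Fin.forall_fin_two, abs_le]
  rw [this, volume_pi_pi, Fin.prod_univ_two]
  simp only [Matrix.cons_val_zero, Matrix.cons_val_one, Real.volume_Icc]
  rw [← ENNReal.ofReal_mul (by linarith)]
  ring_nf

def slab (L ρ a b : ℝ) : Set (ℝ × (Fin 2 → ℝ)) :=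
  {y | |y.1| ≤ L ∧ |y.2 0| ≤ a * (|y.1| + ρ) ∧ |y.2 1| ≤ b * (|y.1| + ρ)}

theorem measurableSet_slab (L ρ a b : ℝ) : MeasurableSet (slab L ρ a b) := by
  have ht : Measurable fun y : ℝ × (Fin 2 → ℝ) => |y.1| := by fun_prop
  have hq (i : Fin 2) : Measurable fun y : ℝ × (Fin 2 → ℝ) => |y.2 i| := by fun_prop
  exact (measurableSet_le ht measurable_const).inter
    ((measurableSet_le (hq 0) (by fun_prop)).inter (measurableSet_le (hq 1) (by fun_prop)))

theorem volume_slab {L ρ a b : ℝ} (hL : 0 ≤ L) (hρ : 0 ≤ ρ) (ha : 0 ≤ a) (hb : 0 ≤ b) :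
    volume (slab L ρ a b) = ENNReal.ofReal (8 * a * b * ((L + ρ) ^ 3 - ρ ^ 3) / 3) := by
  have hslice (t : ℝ) : volume (Prod.mk t ⁻¹' slab L ρ a b) = (Icc (-L) L).indicator
      (fun t => ENNReal.ofReal (2 * (a * (|t| + ρ)) * (2 * (b * (|t| + ρ))))) t := by
    by_cases ht : |t| ≤ L
    · rw [indicator_of_mem (show t ∈ Icc (-L) L from abs_le.1 ht),
        ← volume_abs_le_and_abs_le (by positivity)]
      congr 1
      ext q
      simp [slab, ht]
    · rw [indicator_of_notMem (show t ∉ Icc (-L) L from fun h => ht (abs_le.2 h))]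
      convert measure_empty (μ := (volume : Measure (Fin 2 → ℝ)))
      ext q
      simp [slab, ht]
  rw [Measure.volume_eq_prod, Measure.prod_apply (measurableSet_slab L ρ a b)]
  simp_rw [hslice]
  rw [lintegral_indicator measurableSet_Icc, ← ofReal_integral_eq_lintegral_ofReal]
  · congr 1
    simp_rw [show ∀ t : ℝ, 2 * (a * (|t| + ρ)) * (2 * (b * (|t| + ρ))) =
      4 * a * b * (|t| + ρ) ^ 2 from fun t => by ring]
    rw [integral_const_mul, integral_Icc_abs_add_sq ρ hL]
    ring
  · exact Continuous.integrableOn_Icc (by fun_prop)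
  · exact ae_of_all _ fun t => by positivity

section InnerProductSpace

variable {E : Type*} [NormedAddCommGroup E] [InnerProductSpace ℝ E]

def bandCone (ξ₁ ξ₂ : E) (ε₁ ε₂ : ℝ) : Set E :=
  {x | |⟪ξ₁, x⟫| ≤ ε₁ * ‖x‖ ∧ |⟪ξ₂, x⟫| ≤ ε₂ * ‖x‖}

theorem smul_mem_bandCone_iff {ξ₁ ξ₂ : E} {ε₁ ε₂ t : ℝ} (ht : 0 < t) {x : E} :
    t • x ∈ bandCone ξ₁ ξ₂ ε₁ ε₂ ↔ x ∈ bandCone ξ₁ ξ₂ ε₁ ε₂ := by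
  simp only [bandCone, mem_ofPred_eq, real_inner_smul_right, norm_smul, abs_mul,
    Real.norm_eq_abs, abs_of_pos ht, mul_left_comm _ t]
  rw [mul_le_mul_iff_of_pos_left ht, mul_le_mul_iff_of_pos_left ht]

theorem measurableSet_bandCone [MeasurableSpace E] [OpensMeasurableSpace E] (ξ₁ ξ₂ : E)
    (ε₁ ε₂ : ℝ) : MeasurableSet (bandCone ξ₁ ξ₂ ε₁ ε₂) := by
  have hc (ξ : E) : Continuous fun x : E => |⟪ξ, x⟫| := by fun_prop
  exact (measurableSet_le (hc ξ₁).measurable (by fun_prop)).inter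
    (measurableSet_le (hc ξ₂).measurable (by fun_prop))

noncomputable def innerCoords (u ξ₁ ξ₂ : E) : E →ₗ[ℝ] ℝ × (Fin 2 → ℝ) :=
  (innerₛₗ ℝ u).prod (LinearMap.pi ![innerₛₗ ℝ ξ₁, innerₛₗ ℝ ξ₂])

@[simp]
theorem innerCoords_apply (u ξ₁ ξ₂ x : E) :
    innerCoords u ξ₁ ξ₂ x = (⟪u, x⟫, ![⟪ξ₁, x⟫, ⟪ξ₂, x⟫]) := by
  ext i
  · rfl
  · fin_cases i <;> rfl

theorem exists_norm_le_abs_inner_add [FiniteDimensional ℝ E] {u ξ₁ ξ₂ : E} (hu : ‖u‖ = 1)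
    (h₁ : ⟪ξ₁, u⟫ = 0) (h₂ : ⟪ξ₂, u⟫ = 0) (hinj : Function.Injective (innerCoords u ξ₁ ξ₂)) :
    ∃ K > 0, ∀ x : E, ‖x‖ ≤ |⟪u, x⟫| + K * (|⟪ξ₁, x⟫| + |⟪ξ₂, x⟫|) := by
  obtain ⟨K, hK, hanti⟩ := (innerCoords u ξ₁ ξ₂).injective_iff_antilipschitz.1 hinj
  refine ⟨K, hK, fun x => ?_⟩
  set y := x - ⟪u, x⟫ • u
  have hy : innerCoords u ξ₁ ξ₂ y = (0, ![⟪ξ₁, x⟫, ⟪ξ₂, x⟫]) := by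
    simp [y, inner_sub_right, real_inner_smul_right, hu, h₁, h₂]
  have hcoords : ‖innerCoords u ξ₁ ξ₂ y‖ ≤ |⟪ξ₁, x⟫| + |⟪ξ₂, x⟫| := by
    rw [hy, Prod.norm_mk, norm_zero, max_eq_right (norm_nonneg _)]
    refine pi_norm_le_iff_of_nonneg (by positivity) |>.2 fun i => ?_
    fin_cases i <;> simp
  calc ‖x‖ = ‖⟪u, x⟫ • u + y‖ := by rw [add_sub_cancel]
    _ ≤ ‖⟪u, x⟫ • u‖ + ‖y‖ := norm_add_le _ _
    _ ≤ |⟪u, x⟫| + K * (|⟪ξ₁, x⟫| + |⟪ξ₂, x⟫|) := by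
      rw [norm_smul, hu, mul_one, Real.norm_eq_abs]
      gcongr
      exact (ZeroHomClass.bound_of_antilipschitz _ hanti y).trans (by gcongr)

section Sandwich

variable {u ξ₁ ξ₂ : E} {K ε₁ ε₂ : ℝ} (hu : ‖u‖ = 1) (hK₀ : 0 ≤ K)
  (hK : ∀ x : E, ‖x‖ ≤ |⟪u, x⟫| + K * (|⟪ξ₁, x⟫| + |⟪ξ₂, x⟫|)) (hε₁ : 0 ≤ ε₁) (hε₂ : 0 ≤ ε₂)
include hu hK₀ hK hε₁ hε₂

theorem ball_inter_bandCone_subset_preimage_slab :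
    ball 0 1 ∩ bandCone ξ₁ ξ₂ ε₁ ε₂ ⊆ innerCoords u ξ₁ ξ₂ ⁻¹' slab 1 (K * (ε₁ + ε₂)) ε₁ ε₂ := by
  rintro x ⟨hx, h₁, h₂⟩
  rw [mem_ball_zero_iff] at hx
  have hu_x : |⟪u, x⟫| ≤ ‖x‖ := (abs_real_inner_le_norm u x).trans_eq (by rw [hu, one_mul])
  have hnorm : ‖x‖ ≤ |⟪u, x⟫| + K * (ε₁ + ε₂) := (hK x).trans (by gcongr <;> nlinarith)
  simp only [slab, mem_preimage, innerCoords_apply, mem_ofPred_eq, Matrix.cons_val_zero,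
    Matrix.cons_val_one]
  exact ⟨hu_x.trans hx.le, h₁.trans (by gcongr), h₂.trans (by gcongr)⟩

theorem preimage_slab_subset_ball_inter_bandCone {L : ℝ} (hL : (1 + K * (ε₁ + ε₂)) * L < 1) :
    innerCoords u ξ₁ ξ₂ ⁻¹' slab L 0 ε₁ ε₂ ⊆ ball 0 1 ∩ bandCone ξ₁ ξ₂ ε₁ ε₂ := by
  intro x hx
  simp only [slab, mem_preimage, innerCoords_apply, mem_ofPred_eq, Matrix.cons_val_zero,
    Matrix.cons_val_one, add_zero] at hx
  obtain ⟨hL_x, h₁, h₂⟩ := hx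
  have hu_x : |⟪u, x⟫| ≤ ‖x‖ := (abs_real_inner_le_norm u x).trans_eq (by rw [hu, one_mul])
  have hnorm : ‖x‖ ≤ (1 + K * (ε₁ + ε₂)) * |⟪u, x⟫| := (hK x).trans (by nlinarith)
  have hr : 0 ≤ 1 + K * (ε₁ + ε₂) := by positivity
  exact ⟨mem_ball_zero_iff.2 (by nlinarith [mul_le_mul_of_nonneg_left hL_x hr]),
    h₁.trans (by gcongr), h₂.trans (by gcongr)⟩

end Sandwich

end InnerProductSpace

local notation "ℝ³" => EuclideanSpace ℝ (Fin 3)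

theorem inner_eq_dotProduct (x y : ℝ³) : ⟪x, y⟫ = x.ofLp ⬝ᵥ y.ofLp := by
  simp [EuclideanSpace.inner_eq_star_dotProduct, dotProduct_comm]

theorem inner_cross3_self_left (ξ₁ ξ₂ : ℝ³) : ⟪ξ₁, cross3 ξ₁ ξ₂⟫ = 0 := by
  rw [inner_eq_dotProduct]
  exact dot_self_cross _ _

theorem inner_cross3_self_right (ξ₁ ξ₂ : ℝ³) : ⟪ξ₂, cross3 ξ₁ ξ₂⟫ = 0 := by
  rw [inner_eq_dotProduct]
  exact dot_cross_self _ _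

theorem cross3_ne_zero {ξ₁ ξ₂ : ℝ³} (h : LinearIndependent ℝ ![ξ₁, ξ₂]) :
    cross3 ξ₁ ξ₂ ≠ 0 := by
  have h' : LinearIndependent ℝ ![ξ₁.ofLp, ξ₂.ofLp] := by
    have hcomp : ![ξ₁.ofLp, ξ₂.ofLp] = WithLp.linearEquiv 2 ℝ (Fin 3 → ℝ) ∘ ![ξ₁, ξ₂] := by
      ext i : 1
      fin_cases i <;> rfl
    rw [hcomp]
    exact h.map' _ (LinearEquiv.ker _)
  rw [cross3, Ne, EmbeddingLike.map_eq_zero_iff]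
  exact crossProduct_ne_zero_iff_linearIndependent.2 h'

def rowMatrix (u ξ₁ ξ₂ : ℝ³) : Matrix (Fin 3) (Fin 3) ℝ :=
  Matrix.of ![u.ofLp, ξ₁.ofLp, ξ₂.ofLp]

theorem det_rowMatrix (u ξ₁ ξ₂ : ℝ³) : (rowMatrix u ξ₁ ξ₂).det = ⟪u, cross3 ξ₁ ξ₂⟫ := by
  rw [inner_eq_dotProduct]
  exact (triple_product_eq_det _ _ _).symm

theorem innerCoords_eq_comp (u ξ₁ ξ₂ : ℝ³) :
    ⇑(innerCoords u ξ₁ ξ₂) = MeasurableEquiv.piFinSuccAbove (fun _ => ℝ) 0 ∘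
      Matrix.toLin' (rowMatrix u ξ₁ ξ₂) ∘ WithLp.ofLp := by
  ext x i
  · simp [rowMatrix, inner_eq_dotProduct]
  · fin_cases i <;> simp [rowMatrix, inner_eq_dotProduct, MeasurableEquiv.piFinSuccAbove]

theorem innerCoords_injective {u ξ₁ ξ₂ : ℝ³} (h : ⟪u, cross3 ξ₁ ξ₂⟫ ≠ 0) :
    Function.Injective (innerCoords u ξ₁ ξ₂) := by
  have hM : Function.Injective (Matrix.toLin' (rowMatrix u ξ₁ ξ₂)) :=
    (LinearMap.equivOfDetNeZero (Matrix.toLin' (rowMatrix u ξ₁ ξ₂))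
      (by rwa [LinearMap.det_toLin', det_rowMatrix])).injective
  rw [innerCoords_eq_comp]
  exact (MeasurableEquiv.injective _).comp (hM.comp (WithLp.ofLp_injective 2))

theorem volume_preimage_innerCoords {u ξ₁ ξ₂ : ℝ³} (h : ⟪u, cross3 ξ₁ ξ₂⟫ ≠ 0)
    {s : Set (ℝ × (Fin 2 → ℝ))} (hs : MeasurableSet s) :
    volume (innerCoords u ξ₁ ξ₂ ⁻¹' s) = ENNReal.ofReal |⟪u, cross3 ξ₁ ξ₂⟫|⁻¹ * volume s := by
  have hdet : LinearMap.det (Matrix.toLin' (rowMatrix u ξ₁ ξ₂)) = ⟪u, cross3 ξ₁ ξ₂⟫ := by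
    rw [LinearMap.det_toLin', det_rowMatrix]
  have hsplit : MeasurePreserving (MeasurableEquiv.piFinSuccAbove (fun _ => ℝ) 0) volume volume :=
    measurePreserving_piFinSuccAbove (fun _ : Fin 3 => (volume : Measure ℝ)) 0
  have hm : MeasurableSet (Matrix.toLin' (rowMatrix u ξ₁ ξ₂) ⁻¹'
      (MeasurableEquiv.piFinSuccAbove (fun _ => ℝ) 0 ⁻¹' s)) :=
    (LinearMap.continuous_of_finiteDimensional _).measurable (MeasurableEquiv.measurable _ hs)
  rw [innerCoords_eq_comp, preimage_comp, preimage_comp,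
    (PiLp.volume_preserving_ofLp (ι := Fin 3)).measure_preimage hm.nullMeasurableSet,
    Measure.addHaar_preimage_linearMap _ (hdet ▸ h), hdet, abs_inv,
    hsplit.measure_preimage hs.nullMeasurableSet]

section Sandwich

variable {u ξ₁ ξ₂ : ℝ³} {K ε₁ ε₂ : ℝ} (hu : ‖u‖ = 1) (h : ⟪u, cross3 ξ₁ ξ₂⟫ ≠ 0)
  (hK₀ : 0 ≤ K) (hK : ∀ x : ℝ³, ‖x‖ ≤ |⟪u, x⟫| + K * (|⟪ξ₁, x⟫| + |⟪ξ₂, x⟫|))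
  (hε₁ : 0 ≤ ε₁) (hε₂ : 0 ≤ ε₂)
include hu h hK₀ hK hε₁ hε₂

theorem measureReal_ball_inter_bandCone_le :
    volume.real (ball 0 1 ∩ bandCone ξ₁ ξ₂ ε₁ ε₂) ≤ |⟪u, cross3 ξ₁ ξ₂⟫|⁻¹ *
      (8 * ε₁ * ε₂ * ((1 + K * (ε₁ + ε₂)) ^ 3 - (K * (ε₁ + ε₂)) ^ 3) / 3) := by
  have hr : 0 ≤ (1 + K * (ε₁ + ε₂)) ^ 3 - (K * (ε₁ + ε₂)) ^ 3 :=
    sub_nonneg.2 (pow_le_pow_left₀ (by positivity) (by linarith) 3)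
  refine ENNReal.toReal_le_of_le_ofReal (by positivity) ?_
  calc volume (ball 0 1 ∩ bandCone ξ₁ ξ₂ ε₁ ε₂)
      ≤ volume (innerCoords u ξ₁ ξ₂ ⁻¹' slab 1 (K * (ε₁ + ε₂)) ε₁ ε₂) :=
        measure_mono (ball_inter_bandCone_subset_preimage_slab hu hK₀ hK hε₁ hε₂)
    _ = _ := by
      rw [volume_preimage_innerCoords h (measurableSet_slab ..),
        volume_slab zero_le_one (by positivity) hε₁ hε₂, ← ENNReal.ofReal_mul (by positivity)]

theorem le_measureReal_ball_inter_bandCone {L : ℝ} (hL₀ : 0 ≤ L)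
    (hL : (1 + K * (ε₁ + ε₂)) * L < 1) :
    |⟪u, cross3 ξ₁ ξ₂⟫|⁻¹ * (8 * ε₁ * ε₂ * L ^ 3 / 3) ≤
      volume.real (ball 0 1 ∩ bandCone ξ₁ ξ₂ ε₁ ε₂) := by
  refine (ENNReal.ofReal_le_iff_le_toReal
    (measure_mono inter_subset_left |>.trans_lt measure_ball_lt_top).ne).1 ?_
  calc ENNReal.ofReal (|⟪u, cross3 ξ₁ ξ₂⟫|⁻¹ * (8 * ε₁ * ε₂ * L ^ 3 / 3))
      = volume (innerCoords u ξ₁ ξ₂ ⁻¹' slab L 0 ε₁ ε₂) := by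
        rw [volume_preimage_innerCoords h (measurableSet_slab ..),
          volume_slab hL₀ le_rfl hε₁ hε₂, ← ENNReal.ofReal_mul (by positivity)]
        ring_nf
    _ ≤ volume (ball 0 1 ∩ bandCone ξ₁ ξ₂ ε₁ ε₂) :=
        measure_mono (preimage_slab_subset_ball_inter_bandCone hu hK₀ hK hε₁ hε₂ hL)

end Sandwich

theorem tendsto_measureReal_ball_inter_bandCone_div_of_unit {u ξ₁ ξ₂ : ℝ³} (hu : ‖u‖ = 1)
    (h : ⟪u, cross3 ξ₁ ξ₂⟫ ≠ 0) (h₁ : ⟪ξ₁, u⟫ = 0) (h₂ : ⟪ξ₂, u⟫ = 0) :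
    Tendsto (fun ε : ℝ × ℝ => volume.real (ball 0 1 ∩ bandCone ξ₁ ξ₂ ε.1 ε.2) / (ε.1 * ε.2))
      (𝓝[>] 0 ×ˢ 𝓝[>] 0) (𝓝 (8 / (3 * |⟪u, cross3 ξ₁ ξ₂⟫|))) := by
  obtain ⟨K, hK₀, hK⟩ := exists_norm_le_abs_inner_add hu h₁ h₂ (innerCoords_injective h)
  set C := 8 / (3 * |⟪u, cross3 ξ₁ ξ₂⟫|)
  set r : ℝ × ℝ → ℝ := fun ε => K * (ε.1 + ε.2)
  have hr : Tendsto r (𝓝[>] 0 ×ˢ 𝓝[>] 0) (𝓝 0) := by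
    have : Tendsto r (𝓝 (0, 0)) (𝓝 0) := by
      simpa using ((continuous_fst.add continuous_snd).const_mul K).tendsto ((0 : ℝ), (0 : ℝ))
    exact this.mono_left (nhds_prod_eq (x := (0 : ℝ)) (y := (0 : ℝ)) ▸
      prod_mono nhdsWithin_le_nhds nhdsWithin_le_nhds)
  have hlo : Tendsto (fun ε => C * ((1 + r ε) ^ 2)⁻¹ ^ 3) (𝓝[>] 0 ×ˢ 𝓝[>] 0) (𝓝 C) := by
    simpa using ((((tendsto_const_nhds (x := (1 : ℝ))).add hr).pow 2).inv₀
      (by norm_num)).pow 3 |>.const_mul C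
  have hhi : Tendsto (fun ε => C * ((1 + r ε) ^ 3 - r ε ^ 3)) (𝓝[>] 0 ×ˢ 𝓝[>] 0) (𝓝 C) := by
    simpa using ((((tendsto_const_nhds (x := (1 : ℝ))).add hr).pow 3).sub
      (hr.pow 3)).const_mul C
  refine tendsto_of_tendsto_of_tendsto_of_le_of_le' hlo hhi ?_ ?_ <;>
    filter_upwards [prod_mem_prod self_mem_nhdsWithin self_mem_nhdsWithin] with ε ⟨hε₁, hε₂⟩ <;>
    rw [mem_Ioi] at hε₁ hε₂
  · have hL : (1 + r ε) * ((1 + r ε) ^ 2)⁻¹ < 1 := by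
      have : 0 < r ε := by positivity
      rw [sq, mul_inv, ← mul_assoc, mul_inv_cancel₀ (by positivity), one_mul]
      exact inv_lt_one_of_one_lt₀ (by linarith)
    rw [le_div_iff₀ (by positivity)]
    refine le_of_eq_of_le ?_
      (le_measureReal_ball_inter_bandCone hu h hK₀.le hK hε₁.le hε₂.le (by positivity) hL)
    simp only [C]
    field_simp
  · rw [div_le_iff₀ (by positivity)]
    refine (measureReal_ball_inter_bandCone_le hu h hK₀.le hK hε₁.le hε₂.le).trans_eq ?_
    simp only [C, r]
    field_simp

theorem tendsto_measureReal_ball_inter_bandCone_div {ξ₁ ξ₂ : ℝ³}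
    (h : LinearIndependent ℝ ![ξ₁, ξ₂]) :
    Tendsto (fun ε : ℝ × ℝ => volume.real (ball 0 1 ∩ bandCone ξ₁ ξ₂ ε.1 ε.2) / (ε.1 * ε.2))
      (𝓝[>] 0 ×ˢ 𝓝[>] 0) (𝓝 (8 / (3 * ‖cross3 ξ₁ ξ₂‖))) := by
  have hc : cross3 ξ₁ ξ₂ ≠ 0 := cross3_ne_zero h
  have hu : ‖‖cross3 ξ₁ ξ₂‖⁻¹ • cross3 ξ₁ ξ₂‖ = 1 := by
    rw [norm_smul, norm_inv, norm_norm, inv_mul_cancel₀ (norm_ne_zero_iff.2 hc)]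
  have huc : ⟪‖cross3 ξ₁ ξ₂‖⁻¹ • cross3 ξ₁ ξ₂, cross3 ξ₁ ξ₂⟫ = ‖cross3 ξ₁ ξ₂‖ := by
    rw [real_inner_smul_left, real_inner_self_eq_norm_sq]
    field_simp
  have := tendsto_measureReal_ball_inter_bandCone_div_of_unit hu (huc ▸ norm_ne_zero_iff.2 hc)
    (by rw [real_inner_smul_right, inner_cross3_self_left, mul_zero])
    (by rw [real_inner_smul_right, inner_cross3_self_right, mul_zero])
  rwa [huc, abs_norm] at this

theorem sphereMeasure_real_preimage_bandCone (ξ₁ ξ₂ : ℝ³) (ε₁ ε₂ : ℝ) :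
    sphereMeasure.real ((↑) ⁻¹' bandCone ξ₁ ξ₂ ε₁ ε₂) =
      3 * volume.real (ball 0 1 ∩ bandCone ξ₁ ξ₂ ε₁ ε₂) := by
  rw [measureReal_def, measureReal_def, sphereMeasure,
    Measure.toSphere_preimage_coe_of_smul_mem_iff _ (measurableSet_bandCone ..)
      fun _ ht _ => smul_mem_bandCone_iff ht,
    finrank_euclideanSpace_fin, ENNReal.toReal_mul]
  norm_num

/-- For linearly independent `ξ₁, ξ₂ ∈ ℝ³`, the kernel
`K(ξ₁,ξ₂) = lim_{ε₁,ε₂→0⁺} (1/4π) ∫_{S²} δ_{ε₁}(ξ₁·θ) δ_{ε₂}(ξ₂·θ) dθ`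
equals `1/(2π |ξ₁ × ξ₂|)`. -/
theorem projection_covariance_kernel
    (ξ₁ ξ₂ : EuclideanSpace ℝ (Fin 3)) (h : LinearIndependent ℝ ![ξ₁, ξ₂]) :
    Tendsto (fun ε : ℝ × ℝ =>
        (4 * Real.pi)⁻¹ *
          ∫ θ : sphere (0 : EuclideanSpace ℝ (Fin 3)) 1,
            ((2 * ε.1)⁻¹ *
                Set.indicator (Set.Icc (-ε.1) ε.1) (fun _ => (1 : ℝ))
                  ⟪ξ₁, (θ : EuclideanSpace ℝ (Fin 3))⟫) *
            ((2 * ε.2)⁻¹ *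
                Set.indicator (Set.Icc (-ε.2) ε.2) (fun _ => (1 : ℝ))
                  ⟪ξ₂, (θ : EuclideanSpace ℝ (Fin 3))⟫) ∂sphereMeasure)
      ((𝓝[>] (0 : ℝ)) ×ˢ (𝓝[>] (0 : ℝ)))
      (𝓝 (1 / (2 * Real.pi * ‖cross3 ξ₁ ξ₂‖))) := by
  have hc : ‖cross3 ξ₁ ξ₂‖ ≠ 0 := norm_ne_zero_iff.2 (cross3_ne_zero h)
  have hlim : 1 / (2 * Real.pi * ‖cross3 ξ₁ ξ₂‖) =
      3 / (16 * Real.pi) * (8 / (3 * ‖cross3 ξ₁ ξ₂‖)) := by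
    field_simp
    ring
  rw [hlim]
  refine ((tendsto_measureReal_ball_inter_bandCone_div h).const_mul _).congr' ?_
  filter_upwards [prod_mem_prod self_mem_nhdsWithin self_mem_nhdsWithin] with ε ⟨hε₁, hε₂⟩
  have hband : {θ : sphere (0 : ℝ³) 1 | |⟪ξ₁, (θ : ℝ³)⟫| ≤ ε.1 ∧ |⟪ξ₂, (θ : ℝ³)⟫| ≤ ε.2} =
      (↑) ⁻¹' bandCone ξ₁ ξ₂ ε.1 ε.2 := by
    ext θ
    simp [bandCone]
  rw [integral_indicator_Icc_mul_indicator_Icc _ (by fun_prop) (by fun_prop), hband,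
    sphereMeasure_real_preimage_bandCone]
  rw [mem_Ioi] at hε₁ hε₂
  field_simp
  ring
end

section
/- The minimum eigenvalue of the operator L̂ (defined by L̂ Σ ↔ π_{V̂⊗V̂}(C(ξ_1,ξ_2) K(ξ_1,ξ_2)) where K(ξ_1,ξ_2) = 1/(2π|ξ_1×ξ_2|)) satisfies λ_min(L̂) ≥ 1/(2π M_w(ω_max)²), where M_w(ω_max) = max_{|ξ|≤ω_max} |ξ| w(|ξ|). -/
open MeasureTheory
open scoped BigOperators Matrix

/-! Since `‖ξ₁ × ξ₂‖ ≤ ‖ξ₁‖ ‖ξ₂‖` and `‖ξ‖ w ‖ξ‖ ≤ M` on the ball carrying the supports of the `ĥᵢ`,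
the kernel `K = (2π ‖ξ₁ × ξ₂‖)⁻¹` dominates `w ‖ξ₁‖ w ‖ξ₂‖ / (2π M²)` wherever `C ≠ 0`, away from
the null set of parallel pairs. Integrating against `|C|²` and using that the products
`ĥᵢ(ξ₁) conj ĥⱼ(ξ₂)` are orthonormal for the weight `w ⊗ w` (Parseval) bounds the quadratic form
below by `∑ |Sᵢⱼ|² / (2π M²)`. -/

lemma norm_sq_eq_dotProduct {ι : Type*} [Fintype ι] (x : EuclideanSpace ℝ ι) :
    ‖x‖ ^ 2 = x.ofLp ⬝ᵥ x.ofLp := by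
  rw [← real_inner_self_eq_norm_sq, EuclideanSpace.inner_eq_star_dotProduct, star_trivial]

lemma norm_cross3_le (a b : EuclideanSpace ℝ (Fin 3)) : ‖cross3 a b‖ ≤ ‖a‖ * ‖b‖ := by
  have lagrange : ‖cross3 a b‖ ^ 2 = ‖a‖ ^ 2 * ‖b‖ ^ 2 - (a.ofLp ⬝ᵥ b.ofLp) ^ 2 := by
    rw [norm_sq_eq_dotProduct, norm_sq_eq_dotProduct, norm_sq_eq_dotProduct, sq]
    exact (cross_dot_cross a.ofLp b.ofLp a.ofLp b.ofLp).trans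
      (by rw [dotProduct_comm b.ofLp a.ofLp])
  rw [← pow_le_pow_iff_left₀ (norm_nonneg _) (by positivity) two_ne_zero, lagrange, mul_pow]
  nlinarith [sq_nonneg (a.ofLp ⬝ᵥ b.ofLp)]

lemma mem_span_of_cross3_eq_zero {x y : EuclideanSpace ℝ (Fin 3)} (hx : x ≠ 0)
    (hxy : cross3 x y = 0) : y ∈ Submodule.span ℝ {x} := by
  have hdep : ¬ LinearIndependent ℝ ![x.ofLp, y.ofLp] := by
    rw [← crossProduct_ne_zero_iff_linearIndependent, not_not]
    exact congrArg WithLp.ofLp hxy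
  rw [LinearIndependent.pair_iff' (by simpa using hx)] at hdep
  simp only [ne_eq, not_forall, not_not] at hdep
  obtain ⟨a, ha⟩ := hdep
  exact Submodule.mem_span_singleton.2 ⟨a, WithLp.ofLp_injective 2 (by simpa using ha)⟩

lemma continuous_cross3 :
    Continuous fun p : EuclideanSpace ℝ (Fin 3) × EuclideanSpace ℝ (Fin 3) => cross3 p.1 p.2 := by
  unfold cross3
  fun_prop

lemma ae_cross3_ne_zero :
    ∀ᵐ p : EuclideanSpace ℝ (Fin 3) × EuclideanSpace ℝ (Fin 3), cross3 p.1 p.2 ≠ 0 := by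
  have hmeas : MeasurableSet {p : EuclideanSpace ℝ (Fin 3) × EuclideanSpace ℝ (Fin 3) |
      cross3 p.1 p.2 = 0} :=
    (isClosed_singleton.preimage continuous_cross3).measurableSet
  simp only [ae_iff, ne_eq, not_not]
  rw [Measure.volume_eq_prod, Measure.measure_prod_null hmeas]
  filter_upwards [compl_mem_ae_iff.2 (measure_singleton (0 : EuclideanSpace ℝ (Fin 3)))]
    with x hx
  refine measure_mono_null (t := (Submodule.span ℝ {x} : Set (EuclideanSpace ℝ (Fin 3))))
    (fun y => mem_span_of_cross3_eq_zero hx) ?_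
  refine Measure.addHaar_submodule (volume : Measure (EuclideanSpace ℝ (Fin 3))) _ fun htop => ?_
  have := finrank_span_singleton (K := ℝ) hx
  rw [htop, finrank_top, finrank_euclideanSpace_fin] at this
  omega

section WeightedParseval

variable {X κ : Type*} [Fintype κ] {F : κ → X → ℂ}

lemma ofReal_norm_sum_sq_mul (c : κ → ℂ) (x : X) (r : ℝ) :
    ((‖∑ a, c a * F a x‖ ^ 2 * r : ℝ) : ℂ) =
      ∑ a, ∑ b, c a * star (c b) * (F a x * star (F b x) * r) := by
  rw [Complex.ofReal_mul, Complex.ofReal_pow, ← Complex.mul_conj', map_sum, Finset.sum_mul_sum,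
    Finset.sum_mul]
  refine Finset.sum_congr rfl fun a _ => Finset.sum_mul _ _ _ |>.trans ?_
  refine Finset.sum_congr rfl fun b _ => ?_
  simp only [map_mul, Complex.star_def]
  ring

variable [MeasurableSpace X] {μ : Measure X} {ρ : X → ℝ}

lemma integrable_norm_sum_sq_mul
    (hint : ∀ a b, Integrable (fun x => F a x * star (F b x) * (ρ x : ℂ)) μ) (c : κ → ℂ) :
    Integrable (fun x => ‖∑ a, c a * F a x‖ ^ 2 * ρ x) μ := by
  have hC : Integrable (fun x => ((‖∑ a, c a * F a x‖ ^ 2 * ρ x : ℝ) : ℂ)) μ := by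
    simp_rw [ofReal_norm_sum_sq_mul]
    exact integrable_finsetSum _ fun a _ => integrable_finsetSum _ fun b _ =>
      (hint a b).const_mul _
  simpa only [RCLike.re_to_complex, Complex.ofReal_re] using hC.re

lemma integral_norm_sum_sq_mul_of_orthonormal [DecidableEq κ]
    (hint : ∀ a b, Integrable (fun x => F a x * star (F b x) * (ρ x : ℂ)) μ)
    (horth : ∀ a b, ∫ x, F a x * star (F b x) * (ρ x : ℂ) ∂μ = if a = b then 1 else 0)
    (c : κ → ℂ) :
    ∫ x, ‖∑ a, c a * F a x‖ ^ 2 * ρ x ∂μ = ∑ a, ‖c a‖ ^ 2 := by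
  apply Complex.ofReal_injective
  rw [← integral_complex_ofReal]
  simp_rw [ofReal_norm_sum_sq_mul]
  rw [integral_finsetSum _ fun a _ => integrable_finsetSum _ fun b _ => (hint a b).const_mul _]
  simp_rw [integral_finsetSum _ fun b _ => (hint _ b).const_mul _, integral_const_mul, horth]
  simp [Complex.mul_conj']

end WeightedParseval

section TensorBasis

variable {X ι : Type*} (h : ι → X → ℂ)

lemma tensor_mul_star_tensor (a b : ι × ι) (x y : X) :
    h a.1 x * star (h a.2 y) * star (h b.1 x * star (h b.2 y)) =
      h a.1 x * star (h b.1 x) * star (h a.2 y) * h b.2 y := by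
  rw [star_mul, star_star]
  ring

lemma sum_sum_mul_star_eq_sum_prod [Fintype ι] (S : Matrix ι ι ℂ) (x y : X) :
    ∑ i, ∑ j, S i j * h i x * star (h j y) =
      ∑ a : ι × ι, S a.1 a.2 * (h a.1 x * star (h a.2 y)) := by
  simp only [Fintype.sum_prod_type, mul_assoc]

variable [MeasurableSpace X]

lemma integral_tensor_mul_star_tensor [DecidableEq ι] {μ : Measure X} [SFinite μ] {ρ : X → ℝ}
    (horth : ∀ i j, ∫ x, h i x * star (h j x) * (ρ x : ℂ) ∂μ = if i = j then 1 else 0)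
    (a b : ι × ι) :
    ∫ p, h a.1 p.1 * star (h a.2 p.2) * star (h b.1 p.1 * star (h b.2 p.2)) *
      ((ρ p.1 * ρ p.2 : ℝ) : ℂ) ∂μ.prod μ = if a = b then 1 else 0 := by
  have hsplit : ∀ p : X × X,
      h a.1 p.1 * star (h a.2 p.2) * star (h b.1 p.1 * star (h b.2 p.2)) *
        ((ρ p.1 * ρ p.2 : ℝ) : ℂ) =
      (h a.1 p.1 * star (h b.1 p.1) * (ρ p.1 : ℂ)) *
        starRingEnd ℂ (h a.2 p.2 * star (h b.2 p.2) * (ρ p.2 : ℂ)) := by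
    intro p
    simp only [map_mul, Complex.conj_ofReal, star_mul, star_star, Complex.ofReal_mul,
      ← Complex.star_def]
    ring
  simp_rw [hsplit]
  rw [integral_prod_mul (fun x => h a.1 x * star (h b.1 x) * (ρ x : ℂ))
    (fun y => starRingEnd ℂ (h a.2 y * star (h b.2 y) * (ρ y : ℂ))), integral_conj, horth, horth]
  by_cases h₁ : a.1 = b.1 <;> by_cases h₂ : a.2 = b.2 <;> simp [h₁, h₂, Prod.ext_iff]

variable [Fintype ι]

lemma integrable_norm_tensor_sq_mul {ν : Measure (X × X)} (K : X × X → ℝ)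
    (hK : ∀ i₁ j₁ i₂ j₂, Integrable (fun p : X × X =>
      h i₁ p.1 * star (h j₁ p.1) * star (h i₂ p.2) * h j₂ p.2 * (K p : ℂ)) ν)
    (S : Matrix ι ι ℂ) :
    Integrable (fun p : X × X => ‖∑ i, ∑ j, S i j * h i p.1 * star (h j p.2)‖ ^ 2 * K p) ν := by
  simp_rw [sum_sum_mul_star_eq_sum_prod]
  refine integrable_norm_sum_sq_mul (fun a b => ?_) _
  simp_rw [tensor_mul_star_tensor]
  exact hK _ _ _ _

lemma integral_norm_tensor_sq_mul [DecidableEq ι] {μ : Measure X} [SFinite μ] {ρ : X → ℝ}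
    (horth : ∀ i j, ∫ x, h i x * star (h j x) * (ρ x : ℂ) ∂μ = if i = j then 1 else 0)
    (hint : ∀ i₁ j₁ i₂ j₂, Integrable (fun p : X × X =>
      h i₁ p.1 * star (h j₁ p.1) * star (h i₂ p.2) * h j₂ p.2 * ((ρ p.1 * ρ p.2 : ℝ) : ℂ))
      (μ.prod μ))
    (S : Matrix ι ι ℂ) :
    ∫ p, ‖∑ i, ∑ j, S i j * h i p.1 * star (h j p.2)‖ ^ 2 * (ρ p.1 * ρ p.2) ∂μ.prod μ =
      ∑ i, ∑ j, ‖S i j‖ ^ 2 := by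
  simp_rw [sum_sum_mul_star_eq_sum_prod]
  rw [integral_norm_sum_sq_mul_of_orthonormal (fun a b => ?_)
    (integral_tensor_mul_star_tensor h horth) (fun a => S a.1 a.2), Fintype.sum_prod_type]
  simp_rw [tensor_mul_star_tensor]
  exact hint _ _ _ _

end TensorBasis

lemma inv_mul_weight_le_kernel {M a b : ℝ} {x y : EuclideanSpace ℝ (Fin 3)} (ha : 0 ≤ a)
    (hb : 0 ≤ b) (hxa : ‖x‖ * a ≤ M) (hyb : ‖y‖ * b ≤ M) (hxy : cross3 x y ≠ 0) :
    (2 * Real.pi * M ^ 2)⁻¹ * (a * b) ≤ (2 * Real.pi * ‖cross3 x y‖)⁻¹ := by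
  have hcross : 0 < ‖cross3 x y‖ := norm_pos_iff.2 hxy
  have hM : 0 ≤ M := (by positivity : 0 ≤ ‖x‖ * a).trans hxa
  have key : a * b * ‖cross3 x y‖ ≤ M ^ 2 := calc
    a * b * ‖cross3 x y‖ ≤ a * b * (‖x‖ * ‖y‖) := by gcongr; exact norm_cross3_le x y
    _ = (‖x‖ * a) * (‖y‖ * b) := by ring
    _ ≤ M ^ 2 := by rw [sq]; gcongr
  rcases hM.eq_or_lt with rfl | hM
  · rw [zero_pow two_ne_zero, mul_zero, inv_zero, zero_mul]
    positivity
  rw [inv_mul_le_iff₀ (by positivity), ← div_eq_mul_inv, le_div_iff₀ (by positivity)]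
  nlinarith [Real.pi_pos]

lemma tensor_eq_zero_of_not_norm_le {ι : Type*} [Fintype ι] {ωmax : ℝ}
    {h : ι → EuclideanSpace ℝ (Fin 3) → ℂ} (hsupp : ∀ i ξ, ωmax < ‖ξ‖ → h i ξ = 0)
    (S : Matrix ι ι ℂ) {x y : EuclideanSpace ℝ (Fin 3)} (hxy : ¬(‖x‖ ≤ ωmax ∧ ‖y‖ ≤ ωmax)) :
    ∑ i, ∑ j, S i j * h i x * star (h j y) = 0 := by
  rcases not_and_or.1 hxy with hx | hy
  · simp [hsupp _ _ (not_le.1 hx)]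
  · simp [hsupp _ _ (not_le.1 hy)]

theorem Lhat_min_eigenvalue_general
    (phat : ℕ) (ωmax M : ℝ) (w : ℝ → ℝ)
    (h : Fin phat → (EuclideanSpace ℝ (Fin 3) → ℂ))
    (hsupp : ∀ i ξ, ωmax < ‖ξ‖ → h i ξ = 0)
    (hw : ∀ r : ℝ, 0 ≤ r → 0 ≤ w r)
    (hMmax : ∀ ξ : EuclideanSpace ℝ (Fin 3), ‖ξ‖ ≤ ωmax → ‖ξ‖ * w ‖ξ‖ ≤ M)
    (horth : ∀ i j, (∫ ξ : EuclideanSpace ℝ (Fin 3),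
        h i ξ * star (h j ξ) * (w ‖ξ‖ : ℂ)) = if i = j then 1 else 0)
    (hKint : ∀ i₁ j₁ i₂ j₂, Integrable
      (fun ξp : EuclideanSpace ℝ (Fin 3) × EuclideanSpace ℝ (Fin 3) =>
        h i₁ ξp.1 * star (h j₁ ξp.1) * star (h i₂ ξp.2) * h j₂ ξp.2 *
          (((2 * Real.pi * ‖cross3 ξp.1 ξp.2‖)⁻¹ : ℝ) : ℂ)))
    (hwint : ∀ i₁ j₁ i₂ j₂, Integrable
      (fun ξp : EuclideanSpace ℝ (Fin 3) × EuclideanSpace ℝ (Fin 3) =>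
        h i₁ ξp.1 * star (h j₁ ξp.1) * star (h i₂ ξp.2) * h j₂ ξp.2 *
          ((w ‖ξp.1‖ * w ‖ξp.2‖ : ℝ) : ℂ)))
    (Lhat : Matrix (Fin phat) (Fin phat) ℂ → Matrix (Fin phat) (Fin phat) ℂ)
    (hquad : ∀ S : Matrix (Fin phat) (Fin phat) ℂ,
      Matrix.trace (Sᴴ * Lhat S) =
        ((∫ ξp : EuclideanSpace ℝ (Fin 3) × EuclideanSpace ℝ (Fin 3),
            ‖∑ i, ∑ j, S i j * h i ξp.1 * star (h j ξp.2)‖ ^ 2 *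
              (2 * Real.pi * ‖cross3 ξp.1 ξp.2‖)⁻¹ : ℝ) : ℂ)) :
    ∀ S : Matrix (Fin phat) (Fin phat) ℂ,
      (2 * Real.pi * M ^ 2)⁻¹ * (∑ i, ∑ j, ‖S i j‖ ^ 2) ≤
        (Matrix.trace (Sᴴ * Lhat S)).re := by
  intro S
  have hparseval := integral_norm_tensor_sq_mul h (μ := volume) (ρ := fun ξ => w ‖ξ‖) horth hwint S
  rw [hquad S, Complex.ofReal_re, ← hparseval, ← integral_const_mul]
  refine integral_mono_ae ((integrable_norm_tensor_sq_mul h _ hwint S).const_mul _)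
    (integrable_norm_tensor_sq_mul h _ hKint S) ?_
  filter_upwards [ae_cross3_ne_zero] with p hp
  by_cases hball : ‖p.1‖ ≤ ωmax ∧ ‖p.2‖ ≤ ωmax
  · rw [mul_left_comm]
    exact mul_le_mul_of_nonneg_left (inv_mul_weight_le_kernel (hw _ (norm_nonneg _))
      (hw _ (norm_nonneg _)) (hMmax _ hball.1) (hMmax _ hball.2) hp) (sq_nonneg _)
  · rw [tensor_eq_zero_of_not_norm_le hsupp S hball]
    simp

/-- The minimum eigenvalue of the operator `L̂`, defined via the quadratic form
`⟨L̂ Σ, Σ⟩ = ∫∫ |C(ξ₁,ξ₂)|² K(ξ₁,ξ₂) dξ₁ dξ₂` with `K(ξ₁,ξ₂) = 1/(2π|ξ₁×ξ₂|)`, satisfies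
`λ_min(L̂) ≥ 1/(2π M_w(ω_max)²)`: the Rayleigh quotient of any `Σ` is at least
`1/(2π M_w(ω_max)²)`. -/
theorem Lhat_min_eigenvalue
    (phat : ℕ) (ωmax M : ℝ) (w : ℝ → ℝ)
    (h : Fin phat → (EuclideanSpace ℝ (Fin 3) → ℂ))
    (hcont : ∀ i, Continuous (h i))
    (hsupp : ∀ i ξ, ωmax < ‖ξ‖ → h i ξ = 0)
    (hw : ∀ r : ℝ, 0 ≤ r → 0 ≤ w r)
    (hM : 0 < M)
    (hMmax : ∀ ξ : EuclideanSpace ℝ (Fin 3), ‖ξ‖ ≤ ωmax → ‖ξ‖ * w ‖ξ‖ ≤ M)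
    (horth : ∀ i j, (∫ ξ : EuclideanSpace ℝ (Fin 3),
        h i ξ * star (h j ξ) * (w ‖ξ‖ : ℂ)) = if i = j then 1 else 0)
    (hKint : ∀ i₁ j₁ i₂ j₂, Integrable
      (fun ξp : EuclideanSpace ℝ (Fin 3) × EuclideanSpace ℝ (Fin 3) =>
        h i₁ ξp.1 * star (h j₁ ξp.1) * star (h i₂ ξp.2) * h j₂ ξp.2 *
          (((2 * Real.pi * ‖cross3 ξp.1 ξp.2‖)⁻¹ : ℝ) : ℂ)))
    (hwint : ∀ i₁ j₁ i₂ j₂, Integrable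
      (fun ξp : EuclideanSpace ℝ (Fin 3) × EuclideanSpace ℝ (Fin 3) =>
        h i₁ ξp.1 * star (h j₁ ξp.1) * star (h i₂ ξp.2) * h j₂ ξp.2 *
          ((w ‖ξp.1‖ * w ‖ξp.2‖ : ℝ) : ℂ)))
    (Lhat : Matrix (Fin phat) (Fin phat) ℂ → Matrix (Fin phat) (Fin phat) ℂ)
    (hquad : ∀ S : Matrix (Fin phat) (Fin phat) ℂ,
      Matrix.trace (Sᴴ * Lhat S) =
        ((∫ ξp : EuclideanSpace ℝ (Fin 3) × EuclideanSpace ℝ (Fin 3),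
            ‖∑ i, ∑ j, S i j * h i ξp.1 * star (h j ξp.2)‖ ^ 2 *
              (2 * Real.pi * ‖cross3 ξp.1 ξp.2‖)⁻¹ : ℝ) : ℂ)) :
    ∀ S : Matrix (Fin phat) (Fin phat) ℂ,
      (2 * Real.pi * M ^ 2)⁻¹ * (∑ i, ∑ j, ‖S i j‖ ^ 2) ≤
        (Matrix.trace (Sᴴ * Lhat S)).re :=
  Lhat_min_eigenvalue_general phat ωmax M w h hsupp hw hMmax horth hKint hwint Lhat hquad
end
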